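/- arXiv:2106.10054 — 2 statements merged into one kernel-verified Lean document; each statement's English description precedes it below -/
import Mathlib

section
/- Let α be irrational and let B = [0, β₁) ∪ [c₂, c₂+β₂) be a disjoint union of two arcs on the torus. If q_n < N ≤ q_{n+1} and the translates B, B+α, ..., B+(N-1)α (mod 1) are pairwise disjoint, then β₁ ≤ ‖q_n α‖ and β₂ ≤ ‖q_n α‖. -/
/-!
The denominator `q = q_n` is a positive integer smaller than `N`, so `B` and `B + qα` are two of
the pairwise disjoint translates. But an arc `[c, c + β)` meets its translate by `t` as soon as
`‖t‖ < β`: after shifting `t` by an integer the two real intervals overlap. Hence neither arc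
of `B` can be longer than `‖qα‖`.
-/

open Filter Topology

/-- The denominator `q n` of the `n`-th convergent of the continued fraction of `α`. -/
noncomputable def qd (α : ℝ) (n : ℕ) : ℝ := (GenContFract.of α).dens n

/-- The distance from `x` to the nearest integer. -/
noncomputable def nint (x : ℝ) : ℝ := |x - round x|

/-- The arc of the torus `ℝ/ℤ` which is the image of `[c, c+β)`. -/
noncomputable def arc (c β : ℝ) : Set (AddCircle (1 : ℝ)) :=
  (fun x : ℝ => (x : AddCircle (1 : ℝ))) '' Set.Ico c (c + β)

namespace GenContFract

variable {K : Type*} [Field K] [LinearOrder K] [FloorRing K]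

theorem exists_int_eq_dens_of (v : K) (n : ℕ) : ∃ z : ℤ, (GenContFract.of v).dens n = z := by
  induction n using Nat.twoStepInduction with
  | zero => exact ⟨1, by simp⟩
  | one =>
    rcases h : (GenContFract.of v).s.get? 0 with _ | gp
    · exact ⟨1, by
        rw [dens_stable_of_terminated zero_le_one (terminatedAt_iff_s_none.mpr h)]; simp⟩
    · obtain ⟨-, z, hz⟩ := of_partNum_eq_one_and_exists_int_partDen_eq h
      exact ⟨z, by rw [first_den_eq h, hz]⟩
  | more n ih₀ ih₁ =>
    obtain ⟨z₀, hz₀⟩ := ih₀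
    obtain ⟨z₁, hz₁⟩ := ih₁
    rcases h : (GenContFract.of v).s.get? (n + 1) with _ | gp
    · exact ⟨z₁, by
        rw [dens_stable_of_terminated n.succ.le_succ (terminatedAt_iff_s_none.mpr h), hz₁]⟩
    · obtain ⟨ha, z, hz⟩ := of_partNum_eq_one_and_exists_int_partDen_eq h
      refine ⟨z * z₁ + z₀, ?_⟩
      rw [dens_recurrence h hz₀ hz₁, ha, hz]
      push_cast
      ring

theorem one_le_dens_of [IsStrictOrderedRing K] (v : K) (n : ℕ) :
    1 ≤ (GenContFract.of v).dens n :=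
  calc 1 = (GenContFract.of v).dens 0 := zeroth_den_eq_one.symm
    _ ≤ _ := monotone_nat_of_le_succ (f := (GenContFract.of v).dens) (fun _ ↦ of_den_mono)
      n.zero_le

end GenContFract

theorem exists_nat_pos_eq_qd (α : ℝ) (n : ℕ) : ∃ q : ℕ, 0 < q ∧ qd α n = q := by
  obtain ⟨z, hz⟩ := GenContFract.exists_int_eq_dens_of α n
  have hz₁ : (1 : ℝ) ≤ z := hz ▸ GenContFract.one_le_dens_of α n
  lift z to ℕ using by exact_mod_cast zero_le_one.trans hz₁
  exact ⟨z, by exact_mod_cast hz₁, hz⟩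

theorem image_add_arc (c β t : ℝ) :
    (fun x => x + (t : AddCircle (1 : ℝ))) '' arc c β = arc (c + t) β := by
  simp only [arc, Set.image_image, ← AddCircle.coe_add]
  rw [← Set.image_image (fun x : ℝ => (x : AddCircle (1 : ℝ))) (· + t),
    Set.image_add_const_Ico, add_right_comm]

theorem arc_add_intCast (c β : ℝ) (m : ℤ) : arc (c + m) β = arc c β := by
  have hm : ((m : ℝ) : AddCircle (1 : ℝ)) = 0 :=
    (AddCircle.coe_eq_zero_iff 1).mpr ⟨m, by simp⟩
  rw [← image_add_arc, hm]
  simp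

theorem arc_inter_arc_nonempty_of_abs_sub_lt {c c' β : ℝ} (h : |c' - c| < β) :
    (arc c β ∩ arc c' β).Nonempty := by
  refine ⟨(max c c' : ℝ), ⟨max c c', ?_, rfl⟩, ⟨max c c', ?_, rfl⟩⟩ <;>
  · rw [abs_lt] at h
    constructor <;> cases max_choice c c' <;> simp_all <;> linarith

theorem le_nint_of_disjoint_arc_arc_add {c β t : ℝ} (h : Disjoint (arc c β) (arc (c + t) β)) :
    β ≤ nint t := by
  by_contra! hlt
  rw [← arc_add_intCast (c + t) β (-round t)] at h
  refine Set.not_disjoint_iff_nonempty_inter.mpr (arc_inter_arc_nonempty_of_abs_sub_lt ?_) h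
  have hshift : c + t + ((-round t : ℤ) : ℝ) - c = t - round t := by push_cast; ring
  rwa [hshift]

theorem stmt2_general (α : ℝ) (n N : ℕ) (β₁ c₂ β₂ : ℝ)
    (hN₁ : qd α n < (N : ℝ))
    (hdisj : ∀ j k : ℕ, j < N → k < N → j ≠ k →
      Disjoint ((fun x => x + (((j : ℝ) * α : ℝ) : AddCircle (1 : ℝ))) '' (arc 0 β₁ ∪ arc c₂ β₂))
               ((fun x => x + (((k : ℝ) * α : ℝ) : AddCircle (1 : ℝ))) '' (arc 0 β₁ ∪ arc c₂ β₂))) :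
    β₁ ≤ nint (qd α n * α) ∧ β₂ ≤ nint (qd α n * α) := by
  obtain ⟨q, hq, hqn⟩ := exists_nat_pos_eq_qd α n
  have hqN : q < N := by exact_mod_cast hqn ▸ hN₁
  have hd := hdisj 0 q (hq.trans hqN) hqN hq.ne
  simp only [Set.image_union, image_add_arc, Nat.cast_zero, zero_mul, add_zero] at hd
  rw [hqn]
  exact ⟨le_nint_of_disjoint_arc_arc_add (hd.mono Set.subset_union_left Set.subset_union_left),
    le_nint_of_disjoint_arc_arc_add (hd.mono Set.subset_union_right Set.subset_union_right)⟩

theorem stmt2 (α : ℝ) (hα : Irrational α) (n N : ℕ) (β₁ c₂ β₂ : ℝ)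
    (hβ₁ : 0 < β₁) (hβ₂ : 0 < β₂)
    (harcs : Disjoint (arc 0 β₁) (arc c₂ β₂))
    (hN₁ : qd α n < (N : ℝ)) (hN₂ : (N : ℝ) ≤ qd α (n + 1))
    (hdisj : ∀ j k : ℕ, j < N → k < N → j ≠ k →
      Disjoint ((fun x => x + (((j : ℝ) * α : ℝ) : AddCircle (1 : ℝ))) '' (arc 0 β₁ ∪ arc c₂ β₂))
               ((fun x => x + (((k : ℝ) * α : ℝ) : AddCircle (1 : ℝ))) '' (arc 0 β₁ ∪ arc c₂ β₂))) :
    β₁ ≤ nint (qd α n * α) ∧ β₂ ≤ nint (qd α n * α) :=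
  stmt2_general α n N β₁ c₂ β₂ hN₁ hdisj
end

section
/- For the golden ratio type angle: if α is irrational with all partial quotients eventually equal to 1, then lim_{n→∞} (q_{n+1} + ⌊q_n/2⌋)·‖q_n α‖ = (2√5 + 5)/10. -/
open Filter Topology

/-
Write `eₙ = qₙ α - pₙ`. Once all partial quotients are `1`, both `qₙ` and `eₙ` obey the Fibonacci
recursion, so `qₙ₊₁ - φ qₙ` and `eₙ₊₁ - ψ eₙ` are eventually geometric with ratios `ψ` and `φ`.
The first therefore tends to `0`; the second is bounded (`|eₙ| ≤ 1`) with ratio `|φ| > 1`, so it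
vanishes: `eₙ₊₁ = ψ eₙ`. The determinant identity `qₙ₊₁ eₙ - qₙ eₙ₊₁ = (-1)ⁿ` then reads
`|eₙ| (qₙ₊₁ - ψ qₙ) = 1`, i.e. `|eₙ| (√5 qₙ + o(1)) = 1`, so `qₙ ‖qₙ α‖ → 1 / √5` and
`(qₙ₊₁ + ⌊qₙ / 2⌋) ‖qₙ α‖ → (φ + 1 / 2) / √5 = (2√5 + 5) / 10`.
-/

open GenContFract Real
open GenContFract (of)
open scoped goldenRatio

section GeometricSequences

variable {f : ℕ → ℝ} {c : ℝ} {M : ℕ}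

theorem eq_pow_mul_of_succ_eq_mul (h : ∀ n ≥ M, f (n + 1) = c * f n) {n : ℕ} (hn : M ≤ n)
    (k : ℕ) : f (n + k) = c ^ k * f n := by
  induction k with
  | zero => simp
  | succ k ih => rw [← add_assoc, h _ (by omega), ih, pow_succ]; ring

theorem tendsto_zero_of_succ_eq_mul (hc : |c| < 1) (h : ∀ n ≥ M, f (n + 1) = c * f n) :
    Tendsto f atTop (𝓝 0) := by
  rw [← tendsto_add_atTop_iff_nat M]
  simpa [add_comm, eq_pow_mul_of_succ_eq_mul h le_rfl] using
    (tendsto_pow_atTop_nhds_zero_of_abs_lt_one hc).mul_const (f M)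

theorem eq_zero_of_succ_eq_mul_of_abs_le (hc : 1 < |c|) (h : ∀ n ≥ M, f (n + 1) = c * f n)
    {B : ℝ} (hB : ∀ n, |f n| ≤ B) {n : ℕ} (hn : M ≤ n) : f n = 0 := by
  have hc₀ : 0 < |c| := one_pos.trans hc
  have hbound (k : ℕ) : |f n| ≤ B * |c|⁻¹ ^ k := by
    have := hB (n + k)
    rw [eq_pow_mul_of_succ_eq_mul h hn k, abs_mul, abs_pow] at this
    rw [inv_pow, ← div_eq_mul_inv, le_div_iff₀ (by positivity)]
    linarith
  have hlim : Tendsto (fun k : ℕ => B * |c|⁻¹ ^ k) atTop (𝓝 0) := by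
    simpa using (tendsto_pow_atTop_nhds_zero_of_lt_one (by positivity)
      (inv_lt_one_of_one_lt₀ hc)).const_mul B
  exact abs_nonpos_iff.mp (ge_of_tendsto' hlim hbound)

theorem sub_mul_succ_eq_of_add_eq {a b : ℝ} (hsum : a + b = 1) (hprod : a * b = -1)
    (h : ∀ n ≥ M, f (n + 2) = f (n + 1) + f n) (n : ℕ) (hn : n ≥ M) :
    f (n + 1 + 1) - a * f (n + 1) = b * (f (n + 1) - a * f n) := by
  rw [h n hn]
  linear_combination (-f (n + 1)) * hsum + f n * hprod

end GeometricSequences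

namespace GenContFract

variable {K : Type*} [Field K] [LinearOrder K] [FloorRing K]

theorem exists_int_eq_contsAux_a (v : K) : ∀ n, ∃ z : ℤ, ((of v).contsAux n).a = z
  | 0 => ⟨1, by simp [contsAux]⟩
  | 1 => ⟨⌊v⌋, by simp [contsAux, of_h_eq_floor]⟩
  | n + 2 => by
    cases hs : (of v).s.get? n with
    | none =>
      rw [contsAux_stable_step_of_terminated hs]
      exact exists_int_eq_contsAux_a v (n + 1)
    | some gp =>
      obtain ⟨ha, b, hb⟩ := of_partNum_eq_one_and_exists_int_partDen_eq hs
      obtain ⟨z₀, hz₀⟩ := exists_int_eq_contsAux_a v n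
      obtain ⟨z₁, hz₁⟩ := exists_int_eq_contsAux_a v (n + 1)
      rw [contsAux_recurrence hs rfl rfl]
      exact ⟨b * z₁ + z₀, by rw [ha, hb, hz₀, hz₁]; push_cast; ring⟩

theorem exists_int_eq_nums (v : K) (n : ℕ) : ∃ z : ℤ, (of v).nums n = z := by
  rw [num_eq_conts_a, nth_cont_eq_succ_nth_contAux]
  exact exists_int_eq_contsAux_a v (n + 1)

theorem one_le_dens [IsStrictOrderedRing K] (v : K) (n : ℕ) : 1 ≤ (of v).dens n := by
  induction n with
  | zero => rw [zeroth_den_eq_one]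
  | succ n ih => exact ih.trans of_den_mono

theorem s_get?_eq_of_partDens_get?_eq_one {v : K} {n : ℕ} (h : (of v).partDens.get? n = some 1) :
    (of v).s.get? n = some ⟨1, 1⟩ := by
  obtain ⟨⟨a, b⟩, hs, rfl⟩ := exists_s_b_of_partDen h
  obtain rfl : a = 1 := (of_partNum_eq_one_and_exists_int_partDen_eq hs).1
  exact hs

theorem not_terminatedAt_of_irrational {α : ℝ} (hα : Irrational α) (n : ℕ) :
    ¬(of α).TerminatedAt n := fun h =>
  let ⟨q, hq⟩ := (terminates_iff_rat α).mp ⟨n, h⟩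
  hα ⟨q, hq.symm⟩

noncomputable def convErr (v : K) (n : ℕ) : K := (of v).dens n * v - (of v).nums n

variable {v : K} {n : ℕ}

theorem dens_add_two (h : (of v).s.get? (n + 1) = some ⟨1, 1⟩) :
    (of v).dens (n + 2) = (of v).dens (n + 1) + (of v).dens n := by
  rw [dens_recurrence h rfl rfl]; ring

theorem convErr_add_two (h : (of v).s.get? (n + 1) = some ⟨1, 1⟩) :
    convErr v (n + 2) = convErr v (n + 1) + convErr v n := by
  rw [convErr, convErr, convErr, dens_add_two h, nums_recurrence h rfl rfl]; ring

variable [IsStrictOrderedRing K]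

theorem abs_convErr_le_one (h : ¬(of v).TerminatedAt n) : |convErr v n| ≤ 1 := by
  have hq := one_le_dens v n
  have hq' := one_le_dens v (n + 1)
  have hconv : convErr v n = (of v).dens n * (v - (of v).convs n) := by
    rw [convErr, conv_eq_num_div_den]
    field_simp
  rw [hconv, abs_mul, abs_of_pos (by linarith)]
  calc (of v).dens n * |v - (of v).convs n|
      ≤ (of v).dens n * (1 / ((of v).dens n * (of v).dens (n + 1))) := by
        gcongr; exact abs_sub_convs_le h
    _ = 1 / (of v).dens (n + 1) := by field_simp
    _ ≤ 1 := by rw [div_le_one (by linarith)]; exact hq'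

theorem dens_succ_mul_convErr_sub (h : ¬(of v).TerminatedAt n) :
    (of v).dens (n + 1) * convErr v n - (of v).dens n * convErr v (n + 1) = (-1) ^ n := by
  have hdet : (of v).nums n * (of v).dens (n + 1) - (of v).dens n * (of v).nums (n + 1)
      = (-1) ^ (n + 1) := SimpContFract.determinant (s := SimpContFract.of v) h
  rw [convErr, convErr, pow_succ] at *
  linear_combination -hdet

end GenContFract

/-- `convErr v (n + 1) - ψ * convErr v n` is eventually geometric with ratio `φ > 1`, and bounded. -/
theorem convErr_succ_eq_goldenConj_mul {v : ℝ} {N : ℕ} (hnt : ∀ n, ¬(of v).TerminatedAt n)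
    (hs : ∀ n ≥ N, (of v).s.get? (n + 1) = some ⟨1, 1⟩) :
    ∀ n ≥ N, convErr v (n + 1) = ψ * convErr v n := by
  have hg : ∀ n ≥ N, convErr v (n + 1 + 1) - ψ * convErr v (n + 1) =
      φ * (convErr v (n + 1) - ψ * convErr v n) :=
    sub_mul_succ_eq_of_add_eq ((add_comm _ _).trans goldenRatio_add_goldenConj)
      goldenConj_mul_goldenRatio fun n hn => convErr_add_two (hs n hn)
  have hg_bdd (n : ℕ) : |convErr v (n + 1) - ψ * convErr v n| ≤ 1 + |ψ| := by
    refine (abs_sub _ _).trans ?_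
    rw [abs_mul]
    gcongr
    · exact abs_convErr_le_one (hnt _)
    · exact mul_le_of_le_one_right (abs_nonneg _) (abs_convErr_le_one (hnt _))
  exact fun n hn => sub_eq_zero.mp <| eq_zero_of_succ_eq_mul_of_abs_le
    (f := fun n => convErr v (n + 1) - ψ * convErr v n)
    (by rw [abs_of_pos goldenRatio_pos]; exact one_lt_goldenRatio) hg hg_bdd hn

theorem abs_convErr_mul_dens_sub_goldenConj_eq_one {v : ℝ} {n : ℕ}
    (hnt : ¬(of v).TerminatedAt n) (he : convErr v (n + 1) = ψ * convErr v n) :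
    |convErr v n| * ((of v).dens (n + 1) - ψ * (of v).dens n) = 1 := by
  have hpos : 0 < (of v).dens (n + 1) - ψ * (of v).dens n := by
    have hq₀ := one_le_dens v n
    have hq₁ := one_le_dens v (n + 1)
    nlinarith [goldenConj_neg]
  have hdet := dens_succ_mul_convErr_sub hnt
  rw [he] at hdet
  rw [← abs_of_pos hpos, ← abs_mul,
    show convErr v n * ((of v).dens (n + 1) - ψ * (of v).dens n) = (-1) ^ n by
      linear_combination hdet]
  simp

theorem nint_intCast_add (z : ℤ) {x : ℝ} (hx : |x| < 1 / 2) : nint (z + x) = |x| := by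
  obtain ⟨hx₁, hx₂⟩ := abs_lt.mp hx
  rw [nint, round_intCast_add, round_eq_zero_iff.mpr ⟨hx₁.le, hx₂⟩]
  simp

theorem nint_dens_mul_eq_abs_convErr {v : ℝ} {n : ℕ} (h : |convErr v n| < 1 / 2) :
    nint ((of v).dens n * v) = |convErr v n| := by
  obtain ⟨p, hp⟩ := exists_int_eq_nums v n
  rw [show (of v).dens n * v = p + convErr v n by rw [convErr, hp]; ring, nint_intCast_add p h]

theorem abs_goldenConj_lt_one : |ψ| < 1 :=
  abs_lt.mpr ⟨neg_one_lt_goldenConj, goldenConj_neg.trans one_pos⟩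

/-- Since `q (n + 1) - ψ q n = √5 q n + o(1)`, we get `q n w n → 1 / √5`, and the limit is
`(φ + 1 / 2) / √5`. -/
theorem tendsto_add_floor_half_mul {q w : ℕ → ℝ} (hw : Tendsto w atTop (𝓝 0))
    (hd : Tendsto (fun n => q (n + 1) - φ * q n) atTop (𝓝 0))
    (hqw : ∀ᶠ n in atTop, w n * (q (n + 1) - ψ * q n) = 1) :
    Tendsto (fun n => (q (n + 1) + (⌊q n / 2⌋ : ℝ)) * w n) atTop
      (𝓝 ((2 * √5 + 5) / 10)) := by
  set d := fun n => q (n + 1) - φ * q n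
  have hs5 : √5 ≠ 0 := by positivity
  have hdw : Tendsto (fun n => d n * w n) atTop (𝓝 0) := by simpa using hd.mul hw
  have hqw' : Tendsto (fun n => q n * w n) atTop (𝓝 (1 / √5)) := by
    refine ((hdw.const_sub 1).div_const √5).congr' ?_ |>.trans (by simp)
    filter_upwards [hqw] with n hn
    rw [div_eq_iff hs5, ← goldenRatio_sub_goldenConj]
    linear_combination -hn
  have hfloor : Tendsto (fun n => ((⌊q n / 2⌋ : ℝ) - q n / 2) * w n) atTop (𝓝 0) := by
    refine squeeze_zero_norm (fun n => ?_) (by simpa using hw.norm)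
    have h₁ := Int.floor_le (q n / 2)
    have h₂ := Int.sub_one_lt_floor (q n / 2)
    rw [norm_mul]
    refine mul_le_of_le_one_left (norm_nonneg _) ?_
    rw [Real.norm_eq_abs, abs_le]
    constructor <;> linarith
  have hlim := ((hqw'.const_mul (φ + 1 / 2)).add hdw).add hfloor
  convert hlim using 2 with n
  · simp only [d]; ring
  · have h5 : √5 ^ 2 = 5 := Real.sq_sqrt (by norm_num)
    field_simp
    linear_combination 4 * h5

theorem stmt3 (α : ℝ) (hα : Irrational α)
    (ha : ∃ N : ℕ, ∀ i ≥ N, (GenContFract.of α).partDens.get? i = some 1) :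
    Tendsto (fun n : ℕ => (qd α (n + 1) + (⌊qd α n / 2⌋ : ℝ)) * nint (qd α n * α)) atTop
      (𝓝 ((2 * Real.sqrt 5 + 5) / 10)) := by
  unfold qd
  obtain ⟨N, hN⟩ := ha
  have hnt := not_terminatedAt_of_irrational hα
  have hs : ∀ n ≥ N, (of α).s.get? (n + 1) = some ⟨1, 1⟩ := fun n hn =>
    s_get?_eq_of_partDens_get?_eq_one (hN _ (by omega))
  have he := convErr_succ_eq_goldenConj_mul hnt hs
  have hw : Tendsto (fun n => |convErr α n|) atTop (𝓝 0) := by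
    simpa using (tendsto_zero_of_succ_eq_mul abs_goldenConj_lt_one he).abs
  have hd : Tendsto (fun n => (of α).dens (n + 1) - φ * (of α).dens n) atTop (𝓝 0) :=
    tendsto_zero_of_succ_eq_mul abs_goldenConj_lt_one
      (sub_mul_succ_eq_of_add_eq goldenRatio_add_goldenConj goldenRatio_mul_goldenConj
        fun n hn => dens_add_two (hs n hn))
  refine (tendsto_add_floor_half_mul hw hd ?_).congr' ?_
  · filter_upwards [eventually_ge_atTop N] with n hn
    exact abs_convErr_mul_dens_sub_goldenConj_eq_one (hnt n) (he n hn)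
  · filter_upwards [hw.eventually (gt_mem_nhds (show (0 : ℝ) < 1 / 2 by norm_num))] with n hn
    rw [nint_dens_mul_eq_abs_convErr hn]
end
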